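/- The Levitan N-almost periodic functions of type 1 form a vector space: if X is a complex Banach space, F, G : ℝⁿ → X are continuous and Levitan N-almost periodic of type 1, and α, β ∈ ℂ, then αF + βG is Levitan N-almost periodic of type 1. -/
import Mathlib


open Real Filter Topology

/-- A set `E ⊆ ℝⁿ` is relatively dense if there is `l > 0` such that every closed
ball of radius `l` meets `E`. -/
def RelativelyDense {n : ℕ} (E : Set (EuclideanSpace ℝ (Fin n))) : Prop :=
  ∃ l > (0 : ℝ), ∀ x : EuclideanSpace ℝ (Fin n), ∃ τ ∈ E, ‖τ - x‖ ≤ l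

/-- A set `E ⊆ ℝ` is relatively dense if there is `l > 0` such that every closed
interval of length `2l` meets `E`. -/
def RelativelyDenseR (E : Set ℝ) : Prop :=
  ∃ l > (0 : ℝ), ∀ x : ℝ, ∃ e ∈ E, |e - x| ≤ l

/-- The set `E(ε, N)` of all `(ε, N)`-almost periods of `F`. -/
def AlmostPeriodSet {n : ℕ} {X : Type*} [NormedAddCommGroup X]
    (F : EuclideanSpace ℝ (Fin n) → X) (ε N : ℝ) : Set (EuclideanSpace ℝ (Fin n)) :=
  {τ | ∀ t, ‖t‖ ≤ N → ‖F (t + τ) - F t‖ ≤ ε}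

/-- `F` is Levitan pre-almost periodic: `E(ε, N)` is relatively dense for all `ε, N > 0`. -/
def LevitanPreAP {n : ℕ} {X : Type*} [NormedAddCommGroup X]
    (F : EuclideanSpace ℝ (Fin n) → X) : Prop :=
  ∀ ε > (0 : ℝ), ∀ N > (0 : ℝ), RelativelyDense (AlmostPeriodSet F ε N)

/-- `F` is strongly Levitan `N`-almost periodic: it is Levitan pre-almost periodic and,
for every `N, ε > 0`, there exist `η > 0` and relatively dense sets `E¹, …, Eⁿ ⊆ ℝ`
whose product consists of `(η, N)`-almost periods of `F` and satisfies
`E ± E ⊆ E(ε, N)`. -/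
def StronglyLevitanNAP {n : ℕ} {X : Type*} [NormedAddCommGroup X]
    (F : EuclideanSpace ℝ (Fin n) → X) : Prop :=
  LevitanPreAP F ∧
    ∀ N > (0 : ℝ), ∀ ε > (0 : ℝ), ∃ η > (0 : ℝ), ∃ E : Fin n → Set ℝ,
      (∀ j, RelativelyDenseR (E j)) ∧
      (∀ τ : EuclideanSpace ℝ (Fin n), (∀ j, τ j ∈ E j) → τ ∈ AlmostPeriodSet F η N) ∧
      (∀ a b : EuclideanSpace ℝ (Fin n), (∀ j, a j ∈ E j) → (∀ j, b j ∈ E j) →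
        a + b ∈ AlmostPeriodSet F ε N ∧ a - b ∈ AlmostPeriodSet F ε N)

/-- `F` is Levitan `N`-almost periodic of type `1` (Marchenko): for each `j` there is a
real sequence `(λ^j_l)` such that, for every `N, ε > 0`, there exist `k ∈ ℕ` and `δ > 0`
such that every `τ ∈ ℝⁿ` with `dist(λ^j_l τ_j, 2πℤ) ≤ δ` for all `l < k`, `j`, is an
`(ε, N)`-almost period of `F`. -/
def LevitanType1 {n : ℕ} {X : Type*} [NormedAddCommGroup X]
    (F : EuclideanSpace ℝ (Fin n) → X) : Prop :=
  ∃ lam : Fin n → ℕ → ℝ, ∀ N > (0 : ℝ), ∀ ε > (0 : ℝ), ∃ k : ℕ, ∃ δ > (0 : ℝ),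
    ∀ τ : EuclideanSpace ℝ (Fin n),
      (∀ l < k, ∀ j : Fin n, ∃ m : ℤ, |lam j l * τ j - 2 * Real.pi * m| ≤ δ) →
      τ ∈ AlmostPeriodSet F ε N

/-- The Levitan `N`-almost periodic functions of type `1` form a vector space: a linear
combination of two such continuous functions is again of the same class. -/
theorem stmt10 {n : ℕ} {X : Type*} [NormedAddCommGroup X] [NormedSpace ℂ X]
    [CompleteSpace X] (F G : EuclideanSpace ℝ (Fin n) → X)
    (hFc : Continuous F) (hGc : Continuous G)
    (hF : LevitanType1 F) (hG : LevitanType1 G) (α β : ℂ) :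
    LevitanType1 (fun t => α • F t + β • G t) := by
  obtain ⟨lamF, hlamF⟩ := hF
  obtain ⟨lamG, hlamG⟩ := hG
  refine ⟨fun j l => if l % 2 = 0 then lamF j (l / 2) else lamG j (l / 2), ?_⟩
  intro N hN ε hε
  have hden : (0:ℝ) < ‖α‖ + ‖β‖ + 1 := by positivity
  have hε' : (0:ℝ) < ε / (‖α‖ + ‖β‖ + 1) := by positivity
  obtain ⟨kF, δF, hδF, hFap⟩ := hlamF N hN _ hε'
  obtain ⟨kG, δG, hδG, hGap⟩ := hlamG N hN _ hε'
  refine ⟨2 * max kF kG, min δF δG, lt_min hδF hδG, ?_⟩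
  intro τ hτ t ht
  have hFτ : τ ∈ AlmostPeriodSet F (ε / (‖α‖ + ‖β‖ + 1)) N := by
    apply hFap
    intro l hl j
    obtain ⟨m, hm⟩ := hτ (2 * l) (by omega) j
    refine ⟨m, ?_⟩
    have h2 : (2 * l) % 2 = 0 := by omega
    have h3 : (2 * l) / 2 = l := by omega
    simp only [h2, if_pos rfl, h3] at hm
    exact hm.trans (min_le_left _ _)
  have hGτ : τ ∈ AlmostPeriodSet G (ε / (‖α‖ + ‖β‖ + 1)) N := by
    apply hGap
    intro l hl j
    obtain ⟨m, hm⟩ := hτ (2 * l + 1) (by omega) j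
    refine ⟨m, ?_⟩
    have h2 : (2 * l + 1) % 2 ≠ 0 := by omega
    have h3 : (2 * l + 1) / 2 = l := by omega
    simp only [if_neg h2, h3] at hm
    exact hm.trans (min_le_right _ _)
  have h1 := hFτ t ht
  have h2 := hGτ t ht
  calc ‖(α • F (t + τ) + β • G (t + τ)) - (α • F t + β • G t)‖
      = ‖α • (F (t + τ) - F t) + β • (G (t + τ) - G t)‖ := by
        congr 1; simp [smul_sub]; abel
    _ ≤ ‖α • (F (t + τ) - F t)‖ + ‖β • (G (t + τ) - G t)‖ := norm_add_le _ _
    _ = ‖α‖ * ‖F (t + τ) - F t‖ + ‖β‖ * ‖G (t + τ) - G t‖ := by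
        rw [norm_smul, norm_smul]
    _ ≤ ‖α‖ * (ε / (‖α‖ + ‖β‖ + 1)) + ‖β‖ * (ε / (‖α‖ + ‖β‖ + 1)) := by
        gcongr
    _ ≤ ε := by
        rw [← add_mul, div_eq_mul_inv, ← mul_assoc]
        rw [show (‖α‖ + ‖β‖) * ε * (‖α‖ + ‖β‖ + 1)⁻¹ = ε * ((‖α‖ + ‖β‖) / (‖α‖ + ‖β‖ + 1)) by ring]
        nlinarith [div_le_one_of_le₀ (by linarith : ‖α‖ + ‖β‖ ≤ ‖α‖ + ‖β‖ + 1) hden.le,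
          div_nonneg (by positivity : (0:ℝ) ≤ ‖α‖ + ‖β‖) hden.le]
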